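/- arXiv:2001.06992 — 3 statements merged into one kernel-verified Lean document; each statement's English description precedes it below -/
import Mathlib

section
/- Let G be a finite group. The G-module M := Coker(ρ : ℤ[G] ⊕ ℤ[G] → ℤ[G×G]) is torsion-free as a ℤ-module; that is, if x ∈ ℤ[G×G] and n ≥ 1 satisfy nx ∈ Im ρ, then x ∈ Im ρ. -/
set_option linter.unusedSectionVars false

open TensorProduct

attribute [local instance 2000] TensorProduct.leftModule Finsupp.module Prod.instModule
  Submodule.Quotient.module Pi.module

namespace Paper

variable (G : Type) [Group G] [Fintype G]

/-- The `G`-equivariant map `ρ : ℤ[G] ⊕ ℤ[G] → ℤ[G×G]` with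
`ρ(g, 0) = ∑_{g'} (g, g')` and `ρ(0, g) = ∑_{g'} (g', g)`. -/
noncomputable def rho : ((G →₀ ℤ) × (G →₀ ℤ)) →ₗ[ℤ] ((G × G) →₀ ℤ) :=
  LinearMap.coprod
    ((Finsupp.lift ((G × G) →₀ ℤ) ℤ G) fun g => ∑ g' : G, Finsupp.single (g, g') (1 : ℤ))
    ((Finsupp.lift ((G × G) →₀ ℤ) ℤ G) fun g => ∑ g' : G, Finsupp.single (g', g) (1 : ℤ))

lemma rho_single_left (g : G) :
    rho G (Finsupp.single g 1, 0) = ∑ g' : G, Finsupp.single (g, g') (1 : ℤ) := by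
  simp [rho, Finsupp.sum_single_index]

lemma rho_single_right (g : G) :
    rho G (0, Finsupp.single g 1) = ∑ g' : G, Finsupp.single (g', g) (1 : ℤ) := by
  simp [rho, Finsupp.sum_single_index]

/-- `γ = ∑_{g ∈ G} g ∈ ℤ[G]`. -/
noncomputable def gamma : G →₀ ℤ := ∑ g : G, Finsupp.single g (1 : ℤ)

end Paper

namespace Paper

lemma rho_apply (G : Type) [Group G] [Fintype G] (a b : G →₀ ℤ) (g g' : G) :
    rho G (a, b) (g, g') = a g + b g' := by
  classical
  simp only [rho, LinearMap.coprod_apply, Finsupp.add_apply, Finsupp.lift_apply]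
  congr 1
  · rw [Finsupp.sum_apply, Finsupp.sum_fintype _ _ (by intro i; simp)]
    simp only [Finsupp.smul_apply, Finsupp.finset_sum_apply, Finsupp.single_apply,
      Prod.mk.injEq]
    rw [Finset.sum_eq_single g]
    · simp
    · intro h _ hh; simp [hh]
    · simp
  · rw [Finsupp.sum_apply, Finsupp.sum_fintype _ _ (by intro i; simp)]
    simp only [Finsupp.smul_apply, Finsupp.finset_sum_apply, Finsupp.single_apply,
      Prod.mk.injEq]
    rw [Finset.sum_eq_single g']
    · simp
    · intro h _ hh; simp [hh]
    · simp

lemma key {G : Type} [Group G] [Fintype G] (n : ℤ) (hn : n ≠ 0)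
    (x : (G × G) →₀ ℤ) (hx : n • x ∈ LinearMap.range (rho G)) :
    x ∈ LinearMap.range (rho G) := by
  classical
  obtain ⟨⟨a, b⟩, hab⟩ := hx
  have hval : ∀ g g' : G, a g + b g' = n * x (g, g') := by
    intro g g'
    have := congrArg (fun f : (G × G) →₀ ℤ => f (g, g')) hab
    simpa [rho_apply] using this
  refine ⟨(Finsupp.equivFunOnFinite.symm fun g => x (g, 1) - x (1, 1),
           Finsupp.equivFunOnFinite.symm fun g' => x (1, g')), ?_⟩
  ext ⟨g, g'⟩
  rw [rho_apply]
  have : n * (x (g, 1) - x (1, 1) + x (1, g')) = n * x (g, g') := by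
    have h1 := hval g (1 : G)
    have h2 := hval (1 : G) (1 : G)
    have h3 := hval (1 : G) g'
    have h4 := hval g g'
    ring_nf
    ring_nf at h1 h2 h3 h4
    linarith
  exact mul_left_cancel₀ hn this

/-- `M = Coker ρ` is torsion-free as a `ℤ`-module; that is, if `x ∈ ℤ[G×G]`
and `n ≥ 1` satisfy `n x ∈ Im ρ`, then `x ∈ Im ρ`. -/
theorem statement_4 {G : Type} [Group G] [Fintype G] :
    (∀ (x : (G × G) →₀ ℤ) (n : ℕ), 1 ≤ n →
      (n : ℤ) • x ∈ LinearMap.range (rho G) → x ∈ LinearMap.range (rho G)) ∧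
    (∀ (y : ((G × G) →₀ ℤ) ⧸ LinearMap.range (rho G)) (n : ℤ),
      n ≠ 0 → n • y = 0 → y = 0) := by
  constructor
  · intro x n hn hx
    exact key (n : ℤ) (by exact_mod_cast Nat.one_le_iff_ne_zero.mp hn) x hx
  · intro y n hn hny
    obtain ⟨x, rfl⟩ := Submodule.Quotient.mk_surjective _ y
    rw [← Submodule.Quotient.mk_smul, Submodule.Quotient.mk_eq_zero] at hny
    rw [Submodule.Quotient.mk_eq_zero]
    exact key n hn x hny

end Paper
end

section
/- Let G be a finite group and let γ = Σ_{g∈G} g ∈ ℤ[G]. Then the kernel of ρ : ℤ[G] ⊕ ℤ[G] → ℤ[G×G] is the subgroup generated by the single element (γ, −γ); in particular Ker ρ is free of rank 1 with trivial G-action. -/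
/-!
Evaluating `ρ(a, b)` at `(x, y)` gives `a x + b y`, so `(a, b) ∈ Ker ρ` exactly when `a x = -b y`
for all `x, y`, i.e. when `a` is a constant `c` and `b = -c`, i.e. `(a, b) = c • (γ, -γ)`.
As `γ ≠ 0` and `ℤ[G] × ℤ[G]` is torsion-free, `c ↦ c • (γ, -γ)` is an isomorphism `ℤ ≃ Ker ρ`;
and `G` fixes `γ` because left multiplication permutes `G`.
-/

set_option linter.unusedSectionVars false

open TensorProduct

attribute [local instance 2000] TensorProduct.leftModule Finsupp.module Prod.instModule
  Submodule.Quotient.module Pi.module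

namespace Paper

/-- Direct sum (product) of two representations. -/
noncomputable def prodRep {G : Type} [Group G] {V W : Type} [AddCommGroup V] [Module ℤ V]
    [AddCommGroup W] [Module ℤ W]
    (ρ : Representation ℤ G V) (σ : Representation ℤ G W) :
    Representation ℤ G (V × W) where
  toFun g := (ρ g).prodMap (σ g)
  map_one' := by
    show (ρ 1).prodMap (σ 1) = 1
    rw [map_one, map_one]
    refine LinearMap.ext fun x => ?_
    simp [LinearMap.prodMap_apply]
  map_mul' g h := by
    refine LinearMap.ext fun x => ?_
    simp [LinearMap.prodMap_apply, Module.End.mul_apply]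

/-- The permutation representation on `G →₀ ℤ` induced by a `G`-action on `H`
(the former `Representation.ofMulAction`, which acted on `H →₀ k`). -/
noncomputable def ofMulActionFinsupp (k : Type) [CommSemiring k] (G : Type) [Monoid G]
    (H : Type) [MulAction G H] : Representation k G (H →₀ k) where
  toFun g := Finsupp.lmapDomain k k (g • ·)
  map_one' := by ext; simp
  map_mul' x y := by ext; simp [mul_smul]

lemma prodRep_apply {G V W : Type} [Group G] [AddCommGroup V] [Module ℤ V] [AddCommGroup W]
    [Module ℤ W] (ρ : Representation ℤ G V) (σ : Representation ℤ G W) (g : G) (v : V × W) :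
    prodRep ρ σ g v = (ρ g v.1, σ g v.2) :=
  rfl

variable {G : Type} [Group G] [Fintype G]

@[simp]
lemma gamma_apply (x : G) : gamma G x = 1 := by
  classical
  simp [gamma, Finsupp.finsetSum_apply, Finsupp.single_apply]

lemma rho_apply_s5 (a b : G →₀ ℤ) (x y : G) : rho G (a, b) (x, y) = a x + b y := by
  classical
  suffices (Finsupp.lapply (x, y)).comp (rho G) =
      (Finsupp.lapply x).coprod (Finsupp.lapply y) from LinearMap.congr_fun this (a, b)
  refine LinearMap.prod_ext (Finsupp.lhom_ext' fun g => LinearMap.ext_ring ?_)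
    (Finsupp.lhom_ext' fun g => LinearMap.ext_ring ?_)
  · simp [rho_single_left, Finsupp.single_apply, ite_and, eq_comm]
  · simp [rho_single_right, Finsupp.single_apply, ite_and, eq_comm]

lemma mem_ker_rho_iff {v : (G →₀ ℤ) × (G →₀ ℤ)} :
    v ∈ LinearMap.ker (rho G) ↔ ∀ x y : G, v.1 x + v.2 y = 0 := by
  rw [LinearMap.mem_ker, ← Finsupp.coe_eq_zero, funext_iff, Prod.forall]
  simp only [← rho_apply_s5, Pi.zero_apply]

lemma ker_rho_eq_span :
    LinearMap.ker (rho G) = Submodule.span ℤ {((gamma G, -gamma G) : (G →₀ ℤ) × (G →₀ ℤ))} := by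
  refine le_antisymm (fun v hv => ?_) ?_
  · rw [mem_ker_rho_iff] at hv
    rw [Submodule.mem_span_singleton]
    refine ⟨v.1 1, Prod.ext (Finsupp.ext fun x => ?_) (Finsupp.ext fun y => ?_)⟩
    · simp only [Prod.smul_fst, Finsupp.smul_apply, gamma_apply, smul_eq_mul, mul_one]
      linarith [hv x 1, hv 1 1]
    · simp only [Prod.smul_snd, Finsupp.smul_apply, Finsupp.neg_apply, gamma_apply,
        smul_eq_mul]
      linarith [hv 1 y]
  · rw [Submodule.span_singleton_le_iff_mem, mem_ker_rho_iff]
    simp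

lemma gamma_ne_zero : gamma G ≠ 0 :=
  fun h => by simpa using DFunLike.congr_fun h 1

lemma ofMulActionFinsupp_gamma (g : G) : ofMulActionFinsupp ℤ G G g (gamma G) = gamma G := by
  ext x
  rw [← smul_inv_smul g x]
  exact (Finsupp.mapDomain_apply (MulAction.injective g) _ _).trans (by simp)

/-- `Ker ρ` is generated by `(γ, -γ)`; in particular it is free of rank `1`
with trivial `G`-action. -/
theorem statement_5 {G : Type} [Group G] [Fintype G] :
    LinearMap.ker (rho G) = Submodule.span ℤ {((gamma G, -gamma G) : (G →₀ ℤ) × (G →₀ ℤ))} ∧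
    Nonempty (↥(LinearMap.ker (rho G)) ≃ₗ[ℤ] ℤ) ∧
    (∀ (g : G) (v : (G →₀ ℤ) × (G →₀ ℤ)), v ∈ LinearMap.ker (rho G) →
      prodRep (ofMulActionFinsupp ℤ G G) (ofMulActionFinsupp ℤ G G) g v = v) := by
  have generator_ne_zero : ((gamma G, -gamma G) : (G →₀ ℤ) × (G →₀ ℤ)) ≠ 0 :=
    fun h => gamma_ne_zero (congrArg Prod.fst h)
  refine ⟨ker_rho_eq_span, ⟨LinearEquiv.ofEq _ _ ker_rho_eq_span ≪≫ₗ
    (LinearEquiv.toSpanNonzeroSingleton ℤ _ _ generator_ne_zero).symm⟩, ?_⟩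
  intro g v hv
  rw [ker_rho_eq_span, Submodule.mem_span_singleton] at hv
  obtain ⟨c, rfl⟩ := hv
  simp only [map_smul, prodRep_apply, map_neg, ofMulActionFinsupp_gamma]

end Paper
end

section
/- Let 𝔽₈ be the field with 8 elements and let θ : 𝔽₈ → 𝔽₈ be given by θ(a) = a⁴. For a, b ∈ 𝔽₈ let S(a,b) ∈ M₄(𝔽₈) be the lower-triangular matrix with rows (1,0,0,0), (a,1,0,0), (b,θ(a),1,0), (a²θ(a)+ab+θ(b), aθ(a)+b, a, 1). Then for all a, b, c, d ∈ 𝔽₈ one has S(a,b)·S(c,d) = S(a+c, θ(a)c + b + d). Consequently, the set {S(a,b) : a, b ∈ 𝔽₈} is a subgroup of GL₄(𝔽₈) of order 64, the map S(a,b) ↦ a is a surjective group homomorphism onto the additive group of 𝔽₈ with kernel {S(0,b) : b ∈ 𝔽₈}, and every element S(0,b) commutes with every element S(c,d). -/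
namespace Paper

/-- The matrix `S(a,b)` over `𝔽₈`, where `θ(a) = a⁴`. -/
noncomputable def Smat (a b : GaloisField 2 3) : Matrix (Fin 4) (Fin 4) (GaloisField 2 3) :=
  !![1, 0, 0, 0;
     a, 1, 0, 0;
     b, a ^ 4, 1, 0;
     a ^ 2 * a ^ 4 + a * b + b ^ 4, a * a ^ 4 + b, a, 1]

lemma gf_two_eq_zero : (2 : GaloisField 2 3) = 0 := by
  have := CharP.cast_eq_zero (GaloisField 2 3) 2
  exact_mod_cast this

lemma gf_card : Nat.card (GaloisField 2 3) = 8 := by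
  rw [GaloisField.card 2 3 (by norm_num : 3 ≠ 0)]; norm_num

lemma gf_pow8 (x : GaloisField 2 3) : x ^ 8 = x := by
  have : Fintype (GaloisField 2 3) := Fintype.ofFinite _
  have h := FiniteField.pow_card x
  rwa [← Nat.card_eq_fintype_card, gf_card] at h

lemma smat_mul (a b c d : GaloisField 2 3) :
    Smat a b * Smat c d = Smat (a + c) (a ^ 4 * c + b + d) := by
  have h2 := gf_two_eq_zero
  have ha := gf_pow8 a
  ext i j
  fin_cases i <;> fin_cases j <;>
    simp [Smat, Matrix.mul_apply, Fin.sum_univ_four] <;>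
    first
    | ring1
    | linear_combination (-(2*a*c^3) - 3*a^2*c^2 - 2*a^3*c) * h2
    | linear_combination (-(2*a*c^4) - 5*a^2*c^3 - 5*a^3*c^2 - 3*a^4*c) * h2
    | linear_combination (-(a*c^4) - a^8*c^4) * ha +
        (-(2*b*d^3) - 3*b^2*d^2 - 2*b^3*d - 3*a*c^5 - 8*a^2*c^4 - 10*a^3*c^3
          - 2*a^4*c*d^3 - 8*a^4*c^2 - 6*a^4*b*c*d^2 - 6*a^4*b^2*c*d - 2*a^4*b^3*c
          - 3*a^5*c - 3*a^8*c^2*d^2 - 6*a^8*b*c^2*d - 3*a^8*b^2*c^2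
          - 2*a^12*c^3*d - 2*a^12*b*c^3) * h2

lemma smat_inj (a b c d : GaloisField 2 3) (h : Smat a b = Smat c d) : a = c ∧ b = d := by
  constructor
  · have := congrFun (congrFun h 1) 0
    simpa [Smat] using this
  · have := congrFun (congrFun h 2) 0
    simpa [Smat] using this

lemma smat_one : Smat 0 0 = 1 := by
  ext i j
  fin_cases i <;> fin_cases j <;> norm_num [Smat, Matrix.one_apply, Fin.ext_iff]

/-- `S(a,b)·S(c,d) = S(a+c, θ(a)c + b + d)`; consequently the set
`{S(a,b)}` is a subgroup of `GL₄(𝔽₈)` of order `64` (it contains the identity, is closed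
under multiplication and inverses, and `(a,b) ↦ S(a,b)` is injective), the map
`S(a,b) ↦ a` is a surjective group homomorphism onto the additive group of `𝔽₈`
(surjectivity and the homomorphism property follow from the parametrization and the
multiplication rule), its kernel is `{S(0,b)}`, and every `S(0,b)` commutes with every
`S(c,d)`. -/
theorem statement_19 :
    (∀ a b c d : GaloisField 2 3,
        Smat a b * Smat c d = Smat (a + c) (a ^ 4 * c + b + d)) ∧
    (∀ a b c d : GaloisField 2 3, Smat a b = Smat c d → a = c ∧ b = d) ∧
    Smat 0 0 = 1 ∧
    (∀ a b : GaloisField 2 3, ∃ c d : GaloisField 2 3,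
        Smat a b * Smat c d = 1 ∧ Smat c d * Smat a b = 1) ∧
    (∀ b c d : GaloisField 2 3, Smat 0 b * Smat c d = Smat c d * Smat 0 b) ∧
    Set.ncard {M | ∃ a b : GaloisField 2 3, Smat a b = M} = 64 := by
  have h2 := gf_two_eq_zero
  refine ⟨smat_mul, smat_inj, smat_one, ?_, ?_, ?_⟩
  · intro a b
    refine ⟨a, a * a ^ 4 + b, ?_, ?_⟩
    · rw [smat_mul, show a + a = (0 : GaloisField 2 3) from by linear_combination a * h2,
        show a ^ 4 * a + b + (a * a ^ 4 + b) = (0 : GaloisField 2 3) from by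
          linear_combination (a ^ 5 + b) * h2, smat_one]
    · rw [smat_mul, show a + a = (0 : GaloisField 2 3) from by linear_combination a * h2,
        show a ^ 4 * a + (a * a ^ 4 + b) + b = (0 : GaloisField 2 3) from by
          linear_combination (a ^ 5 + b) * h2, smat_one]
  · intro b c d
    rw [smat_mul, smat_mul, show (0 : GaloisField 2 3) + c = c + 0 from by ring,
      show (0 : GaloisField 2 3) ^ 4 * c + b + d = c ^ 4 * 0 + d + b from by ring]
  · have hinj : Function.Injective
        (fun p : GaloisField 2 3 × GaloisField 2 3 => Smat p.1 p.2) := by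
      intro p q h
      obtain ⟨h1, h2⟩ := smat_inj p.1 p.2 q.1 q.2 h
      exact Prod.ext h1 h2
    have hset : {M | ∃ a b : GaloisField 2 3, Smat a b = M} =
        Set.range (fun p : GaloisField 2 3 × GaloisField 2 3 => Smat p.1 p.2) := by
      ext M
      simp [Set.range, Prod.exists]
    rw [hset, ← Nat.card_coe_set_eq, Nat.card_range_of_injective hinj,
      Nat.card_prod, gf_card]

end Paper
end
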